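/- With the same notation, for all strictly positive X and X', the auxiliary function satisfies G(X, X') ≥ F(X); that is, G is an upper bound for the α-divergence objective F. -/

import Mathlib

open Finset Real Set

/-!
For fixed `(i, t)` the weights `ζ_{itj}` form a probability vector, and
`(AX)_{it} / y_{it} = ∑_j ζ_{itj} · a_{ij} x_{jt} / (y_{it} ζ_{itj})`. Jensen's inequality for the
convex generator `f` of the α-divergence, multiplied by `y_{it}`, bounds each summand of `F(X)` by
the corresponding block of `G(X, X')`.
-/

theorem convexOn_const_mul_rpow {c p : ℝ} (h : 0 ≤ c * (p * (p - 1))) :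
    ConvexOn ℝ (Ioi 0) fun x : ℝ => c * x ^ p := by
  have hderiv : ∀ q x : ℝ, 0 < x → HasDerivAt (fun y : ℝ => y ^ q) (q * x ^ (q - 1)) x :=
    fun q x hx => hasDerivAt_rpow_const (Or.inl hx.ne')
  refine convexOn_of_hasDerivWithinAt2_nonneg (f' := fun x => c * (p * x ^ (p - 1)))
    (f'' := fun x => c * (p * ((p - 1) * x ^ (p - 1 - 1)))) (convex_Ioi 0) ?_ ?_ ?_ ?_
  · exact fun x hx => ((hderiv p x hx).const_mul c).continuousAt.continuousWithinAt
  all_goals rw [interior_Ioi]; intro x hx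
  · exact ((hderiv p x hx).const_mul c).hasDerivWithinAt
  · exact (((hderiv (p - 1) x hx).const_mul p).const_mul c).hasDerivWithinAt
  · have hxq := rpow_pos_of_pos (mem_Ioi.1 hx) (p - 1 - 1)
    calc 0 ≤ c * (p * (p - 1)) * x ^ (p - 1 - 1) := by positivity
      _ = _ := by ring

theorem convexOn_alphaDivergenceGenerator (α : ℝ) :
    ConvexOn ℝ (Ioi 0) fun z : ℝ => 1 / (α * (α - 1)) * (z ^ (1 - α) + (α - 1) * z - α) := by
  have hc : 0 ≤ 1 / (α * (α - 1)) * ((1 - α) * (1 - α - 1)) := by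
    rw [show (1 - α) * (1 - α - 1) = α * (α - 1) by ring]
    -- at `α = 0, 1` the prefactor is `1 / 0 = 0`
    rcases eq_or_ne (α * (α - 1)) 0 with h | h
    · simp [h]
    · rw [one_div_mul_cancel h]
      exact zero_le_one
  refine (((convexOn_const_mul_rpow hc).add
    ((LinearMap.mul ℝ ℝ (1 / (α * (α - 1)) * (α - 1))).convexOn (convex_Ioi 0))).add_const
    (-(1 / (α * (α - 1)) * α))).congr fun z _ => ?_
  simp only [Pi.add_apply, LinearMap.mul_apply']
  ring

theorem ConvexOn.mul_map_sum_div_le {ι : Type*} {f : ℝ → ℝ} (hf : ConvexOn ℝ (Ioi 0) f)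
    {s : Finset ι} {a w : ι → ℝ} {y : ℝ} (hy : 0 < y) (ha : ∀ j ∈ s, 0 < a j)
    (hw : ∀ j ∈ s, 0 < w j) (hw₁ : ∑ j ∈ s, w j = 1) :
    y * f ((∑ j ∈ s, a j) / y) ≤ ∑ j ∈ s, y * w j * f (a j / (y * w j)) := by
  have hmean : ∑ j ∈ s, w j • (a j / (y * w j)) = (∑ j ∈ s, a j) / y := by
    rw [sum_div]
    refine sum_congr rfl fun j hj => ?_
    have hwj := (hw j hj).ne'
    rw [smul_eq_mul]
    field_simp
  have hjensen := hf.map_sum_le (fun j hj => (hw j hj).le) hw₁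
    (fun j hj => div_pos (ha j hj) (mul_pos hy (hw j hj)))
  rw [hmean] at hjensen
  calc y * f ((∑ j ∈ s, a j) / y) ≤ y * ∑ j ∈ s, w j • f (a j / (y * w j)) :=
        mul_le_mul_of_nonneg_left hjensen hy.le
    _ = ∑ j ∈ s, y * w j * f (a j / (y * w j)) := by
        simp only [mul_sum, smul_eq_mul, mul_assoc]

theorem stmt_4_general (I T J : ℕ) (hJ : 0 < J) (α : ℝ)
    (Y : Fin I → Fin T → ℝ) (A : Fin I → Fin J → ℝ) (X X' : Fin J → Fin T → ℝ)
    (hY : ∀ i t, 0 < Y i t) (hA : ∀ i j, 0 < A i j)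
    (hX : ∀ j t, 0 < X j t) (hX' : ∀ j t, 0 < X' j t)
    (f : ℝ → ℝ)
    (hf : ∀ z : ℝ, f z = (1 / (α * (α - 1))) * (z ^ (1 - α) + (α - 1) * z - α)) :
    (∑ i, ∑ t, Y i t * f ((∑ j, A i j * X j t) / Y i t))
      ≤
    ∑ i, ∑ t, ∑ j,
      Y i t * (A i j * X' j t / ∑ k, A i k * X' k t) *
        f (A i j * X j t / (Y i t * (A i j * X' j t / ∑ k, A i k * X' k t))) := by
  obtain rfl : f = _ := funext hf
  refine sum_le_sum fun i _ => sum_le_sum fun t _ => ?_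
  have : Nonempty (Fin J) := Fin.pos_iff_nonempty.mp hJ
  have hS : 0 < ∑ k, A i k * X' k t :=
    sum_pos (fun k _ => mul_pos (hA i k) (hX' k t)) univ_nonempty
  refine (convexOn_alphaDivergenceGenerator α).mul_map_sum_div_le (hY i t)
    (fun j _ => mul_pos (hA i j) (hX j t)) (fun j _ => div_pos (mul_pos (hA i j) (hX' j t)) hS) ?_
  rw [← sum_div, div_self hS.ne']

theorem stmt_4 (I T J : ℕ) (hJ : 0 < J) (α : ℝ) (hα0 : α ≠ 0) (hα1 : α ≠ 1)
    (Y : Fin I → Fin T → ℝ) (A : Fin I → Fin J → ℝ) (X X' : Fin J → Fin T → ℝ)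
    (hY : ∀ i t, 0 < Y i t) (hA : ∀ i j, 0 < A i j)
    (hX : ∀ j t, 0 < X j t) (hX' : ∀ j t, 0 < X' j t)
    (f : ℝ → ℝ)
    (hf : ∀ z : ℝ, f z = (1 / (α * (α - 1))) * (z ^ (1 - α) + (α - 1) * z - α)) :
    (∑ i, ∑ t, Y i t * f ((∑ j, A i j * X j t) / Y i t))
      ≤
    ∑ i, ∑ t, ∑ j,
      Y i t * (A i j * X' j t / ∑ k, A i k * X' k t) *
        f (A i j * X j t / (Y i t * (A i j * X' j t / ∑ k, A i k * X' k t))) :=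
  stmt_4_general I T J hJ α Y A X X' hY hA hX hX' f hf
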